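/- A symmetric function d on {1,…,n} with zero diagonal satisfies the Kalmanson inequalities with respect to the standard circular order if and only if ω(i,j) = ½(d(i,j) + d(i+1,j+1) − d(i,j+1) − d(i+1,j)) ≥ 0 for all pairs i < j with the circular split S_{ij} nontrivial (indices taken cyclically), where the Kalmanson inequalities state that for all i₁ < i₂ < i₃ < i₄: d(i₁,i₃) + d(i₂,i₄) ≥ d(i₂,i₃) + d(i₁,i₄) and d(i₁,i₃) + d(i₂,i₄) ≥ d(i₁,i₂) + d(i₃,i₄). -/

import Mathlib

/-!
With `Δ d p q = d p q + d (p+1) (q+1) - d p (q+1) - d (p+1) q` (`mixedDiff`) we have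
`ω(i, j) = Δ d i j / 2`.
Each nonnegative weight is itself one of the Kalmanson inequalities, for the quadruple
`i < i+1 < j < j+1` (or `0 < i < i+1 < j` with symmetry when `j + 1` wraps around to `0`).
Conversely, lifting indices to `ℕ`, a Kalmanson difference `d a c + d b e - d b c - d a e` for
cyclically ordered `a ≤ b < c ≤ e < a + n` telescopes into the sum of `Δ d p q` over the
rectangle `[a, b) × [c, e)`, and every pair `(p, q)` in that rectangle gives a nontrivial split.
The second Kalmanson inequality is the case `[i₂, i₃) × [i₄, i₁ + n)`.
-/

open Finset

def mixedDiff {α M : Type*} [Add α] [One α] [AddCommGroup M] (D : α → α → M) (p q : α) : M :=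
  D p q + D (p + 1) (q + 1) - D p (q + 1) - D (p + 1) q

theorem mixedDiff_comm {α M : Type*} [Add α] [One α] [AddCommGroup M] {D : α → α → M}
    (hD : ∀ p q, D p q = D q p) (p q : α) : mixedDiff D q p = mixedDiff D p q := by
  simp only [mixedDiff, hD q p, hD (q + 1) (p + 1), hD q (p + 1), hD (q + 1) p]
  abel

theorem sum_Ico_sum_Ico_mixedDiff {M : Type*} [AddCommGroup M] (D : ℕ → ℕ → M) {a b c e : ℕ}
    (hab : a ≤ b) (hce : c ≤ e) :
    ∑ p ∈ Ico a b, ∑ q ∈ Ico c e, mixedDiff D p q = D a c + D b e - D b c - D a e := by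
  calc ∑ p ∈ Ico a b, ∑ q ∈ Ico c e, mixedDiff D p q
      = ∑ p ∈ Ico a b, ((D (p + 1) e - D (p + 1) c) - (D p e - D p c)) := by
        refine sum_congr rfl fun p _ => ?_
        have hΔ : ∀ q,
            mixedDiff D p q = (D (p + 1) (q + 1) - D p (q + 1)) - (D (p + 1) q - D p q) :=
          fun q => by simp only [mixedDiff]; abel
        simp only [hΔ]
        exact (sum_Ico_sub (fun r => D (p + 1) r - D p r) hce).trans (by abel)
    _ = (D b e - D b c) - (D a e - D a c) := sum_Ico_sub (fun r => D r e - D r c) hab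
    _ = D a c + D b e - D b c - D a e := by abel

def IsKalmanson {n : ℕ} (d : Fin n → Fin n → ℝ) : Prop :=
  ∀ i₁ i₂ i₃ i₄ : Fin n, i₁ < i₂ → i₂ < i₃ → i₃ < i₄ →
    d i₁ i₃ + d i₂ i₄ ≥ d i₂ i₃ + d i₁ i₄ ∧ d i₁ i₃ + d i₂ i₄ ≥ d i₁ i₂ + d i₃ i₄

section Cyclic

variable {n : ℕ} [NeZero n]

theorem mixedDiff_nonneg_of_isKalmanson {d : Fin n → Fin n → ℝ} (hsym : ∀ i j, d i j = d j i)
    (hd : IsKalmanson d) {i j : Fin n} (hij : i < j) (h₁ : i + 1 ≠ j) (h₂ : j + 1 ≠ i) :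
    0 ≤ mixedDiff d i j := by
  have hi : ((i + 1 : Fin n) : ℕ) = i + 1 := Fin.val_add_one_of_lt' (by omega)
  have hi₁ : i < i + 1 := by rw [Fin.lt_def, hi]; omega
  have hi₂ : i + 1 < j := lt_of_le_of_ne (by rw [Fin.le_def, hi]; exact hij) h₁
  rcases Nat.lt_or_ge ((j : ℕ) + 1) n with hj | hj
  · have hj₁ : j < j + 1 := by rw [Fin.lt_def, Fin.val_add_one_of_lt' hj]; omega
    have := (hd i (i + 1) j (j + 1) hi₁ hi₂ hj₁).1
    unfold mixedDiff; linarith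
  · have hj₀ : j + 1 = 0 := Fin.ext (by simp [Fin.val_add, show (j : ℕ) + 1 = n by omega])
    rw [hj₀] at h₂
    have := (hd 0 i (i + 1) j ((Fin.pos_iff_ne_zero' i).2 h₂.symm) hi₁ hi₂).2
    simp only [mixedDiff, hj₀]; linarith [hsym i 0, hsym (i + 1) 0]

open Fin.NatCast

theorem Fin.natCast_ne_natCast_of_lt_of_lt_add {p q : ℕ} (hpq : p < q) (hqp : q < p + n) :
    (p : Fin n) ≠ q := by
  intro h
  have hdvd : n ∣ q - p := (Nat.modEq_iff_dvd' hpq.le).1 (congrArg Fin.val h)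
  have := Nat.le_of_dvd (by omega) hdvd
  omega

theorem natCast_split_nontrivial {p q : ℕ} (h₁ : p + 1 < q) (h₂ : q + 1 < p + n) :
    (p : Fin n) ≠ q ∧ (p : Fin n) + 1 ≠ q ∧ (q : Fin n) + 1 ≠ p := by
  refine ⟨Fin.natCast_ne_natCast_of_lt_of_lt_add (by omega) (by omega), ?_, ?_⟩
  · rw [← Nat.cast_succ]
    exact Fin.natCast_ne_natCast_of_lt_of_lt_add h₁ (by omega)
  · have := Fin.natCast_ne_natCast_of_lt_of_lt_add (n := n) h₂ (by omega)
    rwa [Nat.cast_add p, Fin.natCast_self, add_zero, Nat.cast_succ] at this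

theorem kalmanson_ineq_of_mixedDiff_nonneg {d : Fin n → Fin n → ℝ}
    (hd : ∀ i j : Fin n, i ≠ j → i + 1 ≠ j → j + 1 ≠ i → 0 ≤ mixedDiff d i j)
    {a b c e : ℕ} (hab : a ≤ b) (hbc : b < c) (hce : c ≤ e) (hea : e < a + n) :
    d b c + d a e ≤ d a c + d b e := by
  have hsum := sum_Ico_sum_Ico_mixedDiff (fun p q : ℕ => d p q) hab hce
  have hnonneg : 0 ≤ ∑ p ∈ Ico a b, ∑ q ∈ Ico c e, mixedDiff (fun p q : ℕ => d p q) p q :=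
    sum_nonneg fun p hp => sum_nonneg fun q hq => by
      simp only [mem_Ico] at hp hq
      obtain ⟨h₀, h₁, h₂⟩ :=
        natCast_split_nontrivial (n := n) (p := p) (q := q) (by omega) (by omega)
      have := hd _ _ h₀ h₁ h₂
      unfold mixedDiff at this ⊢; push_cast; exact this
  linarith

theorem isKalmanson_of_mixedDiff_nonneg {d : Fin n → Fin n → ℝ} (hsym : ∀ i j, d i j = d j i)
    (hd : ∀ i j : Fin n, i ≠ j → i + 1 ≠ j → j + 1 ≠ i → 0 ≤ mixedDiff d i j) :
    IsKalmanson d := by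
  intro i₁ i₂ i₃ i₄ h₁₂ h₂₃ h₃₄
  have hn : (i₄ : ℕ) < n := i₄.isLt
  rw [Fin.lt_def] at h₁₂ h₂₃ h₃₄
  have first := kalmanson_ineq_of_mixedDiff_nonneg hd h₁₂.le h₂₃ h₃₄.le (by omega)
  have second :=
    kalmanson_ineq_of_mixedDiff_nonneg hd h₂₃.le h₃₄ (e := i₁ + n) (by omega) (by omega)
  simp only [Fin.cast_val_eq_self, Nat.cast_add, Fin.natCast_self, add_zero] at first second
  constructor <;> linarith [hsym i₂ i₁, hsym i₃ i₁]

end Cyclic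

theorem kalmanson_iff_weights_nonneg_general {n : ℕ} [NeZero n]
    (d : Fin n → Fin n → ℝ)
    (hsym : ∀ i j, d i j = d j i) :
    (∀ i₁ i₂ i₃ i₄ : Fin n, i₁ < i₂ → i₂ < i₃ → i₃ < i₄ →
        d i₁ i₃ + d i₂ i₄ ≥ d i₂ i₃ + d i₁ i₄ ∧
        d i₁ i₃ + d i₂ i₄ ≥ d i₁ i₂ + d i₃ i₄) ↔
    (∀ i j : Fin n, i < j → i + 1 ≠ j → j + 1 ≠ i →
        0 ≤ (d i j + d (i + 1) (j + 1) - d i (j + 1) - d (i + 1) j) / 2) := by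
  refine ⟨fun hd i j hij h₁ h₂ =>
    div_nonneg (mixedDiff_nonneg_of_isKalmanson hsym hd hij h₁ h₂) zero_le_two, fun hω => ?_⟩
  have hΔ : ∀ i j : Fin n, i ≠ j → i + 1 ≠ j → j + 1 ≠ i → 0 ≤ mixedDiff d i j := by
    intro i j hne h₁ h₂
    rcases hne.lt_or_gt with hij | hji
    · have := hω i j hij h₁ h₂
      unfold mixedDiff; linarith
    · have := hω j i hji h₂ h₁
      rw [← mixedDiff_comm hsym]; unfold mixedDiff; linarith
  exact isKalmanson_of_mixedDiff_nonneg hsym hΔ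

/-- A symmetric function with zero diagonal satisfies the Kalmanson
inequalities for the standard circular order on `Fin n` if and only if all the
split-decomposition weights `ω i j` of nontrivial circular splits are
nonnegative (indices cyclic; the split `S_{ij}` is nontrivial when
`i + 1 ≠ j` and `j + 1 ≠ i`). -/
theorem kalmanson_iff_weights_nonneg {n : ℕ} [NeZero n]
    (d : Fin n → Fin n → ℝ)
    (hsym : ∀ i j, d i j = d j i) (hdiag : ∀ i, d i i = 0) :
    (∀ i₁ i₂ i₃ i₄ : Fin n, i₁ < i₂ → i₂ < i₃ → i₃ < i₄ →
        d i₁ i₃ + d i₂ i₄ ≥ d i₂ i₃ + d i₁ i₄ ∧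
        d i₁ i₃ + d i₂ i₄ ≥ d i₁ i₂ + d i₃ i₄) ↔
    (∀ i j : Fin n, i < j → i + 1 ≠ j → j + 1 ≠ i →
        0 ≤ (d i j + d (i + 1) (j + 1) - d i (j + 1) - d (i + 1) j) / 2) :=
  kalmanson_iff_weights_nonneg_general d hsym
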